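/- Theorem 3.1, direction (i) ⇒ (iii): Suppose c : [0,∞) → ℝ^d_{>0} is differentiable, solves the mass-action ODE c'(t) = Σ_k κ_k c(t)^{y_k} ζ_k with c(0) = c̃ ∈ ℝ^d_{>0}, and satisfies the DR condition. Then the function P(x,t) := ∏_{i=1}^d e^{−c_i(t)} c_i(t)^{x_i}/x_i! solves the chemical master equation, and its initial condition is P(x,0) = ∏_{i=1}^d e^{−c̃_i} c̃_i^{x_i}/x_i!. -/

import Mathlib

/-!
With `w_k = κ_k c^{y_k}`, the ODE gives `∂ₜ P = P · Σ_k w_k (H(y'_k) - H(y_k))` for the linear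
function `H(z) = Σ_i (x_i / c_i - 1) z_i`, while the right-hand side of the CME at `P` is
`P · Σ_k w_k (G(y'_k) - G(y_k))` with `G(z) = x^{(z)} / c^z` (falling powers). Both sums regroup by
complexes: `G - H - 1` vanishes at every complex with `‖z‖₁ ≤ 1`, and at every other complex the
DR condition says that the inflow `Σ_{y'_k = z} w_k` equals the outflow `Σ_{y_k = z} w_k`.
-/

open Finset

/-- Monomial `u^v = ∏ i, u i ^ v i` (with the convention `0^0 = 1`). -/
noncomputable def monPow {d : ℕ} (u : Fin d → ℝ) (v : Fin d → ℕ) : ℝ :=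
  ∏ i, u i ^ v i

/-- The reaction vector `ζ = y' - y`, viewed as a real vector. -/
def zetaVec {d : ℕ} (y y' : Fin d → ℕ) : Fin d → ℝ :=
  fun i => (y' i : ℝ) - (y i : ℝ)

/-- Stochastic mass action intensity `λ_k(x) = κ_k ∏_i x_i!/(x_i - y_{ki})!`,
taken to be `0` when `x` is not componentwise at least `y_k`. -/
noncomputable def intensity {d : ℕ} (κk : ℝ) (yk : Fin d → ℕ) (x : Fin d → ℕ) : ℝ :=
  κk * ∏ i, ((x i).descFactorial (yk i) : ℝ)

/-- Right-hand side of the deterministic mass-action ODE: `Σ_k κ_k c^{y_k} ζ_k`. -/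
noncomputable def massActionRHS {d K : ℕ} (κ : Fin K → ℝ) (y y' : Fin K → Fin d → ℕ)
    (c : Fin d → ℝ) : Fin d → ℝ :=
  ∑ k, (κ k * monPow c (y k)) • zetaVec (y k) (y' k)

/-- `c` is differentiable on `[0,∞)` and solves the mass-action ODE there. -/
def solvesMassAction {d K : ℕ} (κ : Fin K → ℝ) (y y' : Fin K → Fin d → ℕ)
    (c : ℝ → Fin d → ℝ) : Prop :=
  ∀ t ≥ (0:ℝ), HasDerivWithinAt c (massActionRHS κ y y' (c t)) (Set.Ici 0) t

/-- The dynamical and restricted (DR) complex balance condition: for every complex `z`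
with `‖z‖₁ ≥ 2` and every `t ≥ 0`,
`Σ_{k : y_k = z} κ_k c(t)^z = Σ_{k : y'_k = z} κ_k c(t)^{y_k}`. -/
def DRcondition {d K : ℕ} (κ : Fin K → ℝ) (y y' : Fin K → Fin d → ℕ)
    (c : ℝ → Fin d → ℝ) : Prop :=
  ∀ z : Fin d → ℕ, 2 ≤ ∑ i, z i → ∀ t ≥ (0:ℝ),
    ∑ k ∈ univ.filter (fun k => y k = z), κ k * monPow (c t) z
      = ∑ k ∈ univ.filter (fun k => y' k = z), κ k * monPow (c t) (y k)

/-- `P` solves the chemical master equation on `[0,∞)`: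
`∂ₜ P(x,t) = Σ_k λ_k(x-ζ_k) P(x-ζ_k,t) 1{x-ζ_k ≥ 0} - Σ_k λ_k(x) P(x,t)`. -/
def solvesCME {d K : ℕ} (κ : Fin K → ℝ) (y y' : Fin K → Fin d → ℕ)
    (P : (Fin d → ℕ) → ℝ → ℝ) : Prop :=
  ∀ x : Fin d → ℕ, ∀ t ≥ (0:ℝ),
    HasDerivWithinAt (P x)
      ((∑ k, if ∀ i, y' k i ≤ x i + y k i then
          intensity (κ k) (y k) (fun i => x i + y k i - y' k i)
            * P (fun i => x i + y k i - y' k i) t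
        else 0)
       - ∑ k, intensity (κ k) (y k) x * P x t)
      (Set.Ici 0) t

/-- The product-Poisson probability mass function `∏_i e^{-c_i} c_i^{x_i}/x_i!`. -/
noncomputable def productPoisson {d : ℕ} (c : Fin d → ℝ) (x : Fin d → ℕ) : ℝ :=
  ∏ i, Real.exp (-(c i)) * (c i) ^ (x i) / (x i).factorial

noncomputable def poissonWeight (u : ℝ) (n : ℕ) : ℝ :=
  Real.exp (-u) * u ^ n / n.factorial

lemma productPoisson_eq_prod_poissonWeight {d : ℕ} (c : Fin d → ℝ) (x : Fin d → ℕ) :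
    productPoisson c x = ∏ i, poissonWeight (c i) (x i) :=
  rfl

lemma hasDerivAt_poissonWeight (n : ℕ) {u : ℝ} (hu : u ≠ 0) :
    HasDerivAt (poissonWeight · n) (poissonWeight u n * (n / u - 1)) u := by
  have h := ((hasDerivAt_neg u).exp.mul (hasDerivAt_pow n u)).div_const (n.factorial : ℝ)
  refine h.congr_deriv ?_
  rcases n with _ | n
  · simp [poissonWeight]
  · simp only [poissonWeight, pow_succ, Nat.add_sub_cancel]
    field_simp
    ring

lemma descFactorial_mul_poissonWeight (u : ℝ) {m a : ℕ} (h : a ≤ m) :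
    (m.descFactorial a : ℝ) * poissonWeight u m = u ^ a * poissonWeight u (m - a) := by
  have hfac : ((m - a).factorial : ℝ) * m.descFactorial a = m.factorial := by
    exact_mod_cast Nat.factorial_mul_descFactorial h
  have hD : (m.descFactorial a : ℝ) ≠ 0 := by
    exact_mod_cast (Nat.descFactorial_pos.mpr h).ne'
  have hma : ((m - a).factorial : ℝ) ≠ 0 := by positivity
  simp only [poissonWeight]
  rw [← pow_mul_pow_sub u h, ← hfac]
  field_simp

lemma descFactorial_mul_poissonWeight_shift {u : ℝ} (hu : u ≠ 0) {n a b : ℕ} (h : b ≤ n + a) :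
    ((n + a - b).descFactorial a : ℝ) * poissonWeight u (n + a - b)
      = poissonWeight u n * (u ^ a * (n.descFactorial b / u ^ b)) := by
  rcases le_or_gt b n with hb | hb
  · calc _ = u ^ a * poissonWeight u (n - b) := by
          rw [descFactorial_mul_poissonWeight u (by omega), show n + a - b - a = n - b by omega]
      _ = u ^ a * (n.descFactorial b * poissonWeight u n) / u ^ b := by
          rw [descFactorial_mul_poissonWeight u hb]
          field_simp
      _ = _ := by ring
  · rw [Nat.descFactorial_eq_zero_iff_lt.mpr (by omega), Nat.descFactorial_eq_zero_iff_lt.mpr hb]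
    simp

lemma hasDerivWithinAt_productPoisson {d : ℕ} {c : ℝ → Fin d → ℝ} {c' : Fin d → ℝ}
    {s : Set ℝ} {t : ℝ} (x : Fin d → ℕ) (hc : HasDerivWithinAt c c' s t)
    (hct : ∀ i, c t i ≠ 0) :
    HasDerivWithinAt (fun r => productPoisson (c r) x)
      (productPoisson (c t) x * ∑ i, (x i / c t i - 1) * c' i) s t := by
  have hi : ∀ i ∈ (univ : Finset (Fin d)), HasDerivWithinAt (fun r => poissonWeight (c r i) (x i))
      (poissonWeight (c t i) (x i) * (x i / c t i - 1) * c' i) s t := fun i _ =>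
    HasDerivAt.comp_hasDerivWithinAt (h₂ := (poissonWeight · (x i))) t
      (hasDerivAt_poissonWeight (x i) (hct i)) (hasDerivWithinAt_pi.mp hc i)
  refine (HasDerivWithinAt.fun_finsetProd hi).congr_deriv ?_
  rw [mul_sum]
  refine sum_congr rfl fun i _ => ?_
  rw [smul_eq_mul, productPoisson_eq_prod_poissonWeight, ← prod_erase_mul univ _ (mem_univ i)]
  ring

lemma eq_zero_or_eq_single_of_sum_le_one {ι : Type*} [Fintype ι] [DecidableEq ι] {z : ι → ℕ}
    (hz : ∑ i, z i ≤ 1) : z = 0 ∨ ∃ j, z = Pi.single j 1 := by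
  by_cases h0 : z = 0
  · exact Or.inl h0
  obtain ⟨j, hj⟩ := Function.ne_iff.mp h0
  rw [Pi.zero_apply] at hj
  have hpair : ∀ i, i ≠ j → z i + z j ≤ 1 := fun i hij =>
    (sum_pair hij).symm.trans_le ((sum_le_sum_of_subset (subset_univ _)).trans hz)
  refine Or.inr ⟨j, funext fun i => ?_⟩
  rcases eq_or_ne i j with rfl | hij
  · have := (single_le_sum (fun _ _ => Nat.zero_le _) (mem_univ i)).trans hz
    rw [Pi.single_eq_same]
    omega
  · have := hpair i hij
    rw [Pi.single_eq_of_ne hij]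
    omega

section Network

variable {d K : ℕ}

noncomputable def descPowRatio (c : Fin d → ℝ) (x z : Fin d → ℕ) : ℝ :=
  ∏ i, ((x i).descFactorial (z i) : ℝ) / c i ^ z i

/-- The derivative of `log (productPoisson c x)` in the direction `z`. -/
noncomputable def logPoissonSlope (c : Fin d → ℝ) (x z : Fin d → ℕ) : ℝ :=
  ∑ i, (x i / c i - 1) * z i

lemma descPowRatio_eq_one_add_logPoissonSlope (c : Fin d → ℝ) (x : Fin d → ℕ)
    {z : Fin d → ℕ} (hz : ∑ i, z i ≤ 1) :
    descPowRatio c x z = 1 + logPoissonSlope c x z := by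
  rcases eq_zero_or_eq_single_of_sum_le_one hz with rfl | ⟨j, rfl⟩
  · simp [descPowRatio, logPoissonSlope]
  · rw [descPowRatio, logPoissonSlope, Fintype.prod_eq_single j fun i hij => by
      simp [Pi.single_eq_of_ne hij], Fintype.sum_eq_single j fun i hij => by
      simp [Pi.single_eq_of_ne hij]]
    simp

lemma intensity_mul_productPoisson {c : Fin d → ℝ} (hc : ∀ i, c i ≠ 0) (κk : ℝ)
    (yk x : Fin d → ℕ) :
    intensity κk yk x * productPoisson c x
      = productPoisson c x * (κk * monPow c yk * descPowRatio c x yk) := by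
  have : monPow c yk * descPowRatio c x yk = ∏ i, ((x i).descFactorial (yk i) : ℝ) := by
    rw [monPow, descPowRatio, ← prod_mul_distrib]
    exact prod_congr rfl fun i _ => mul_div_cancel₀ _ (pow_ne_zero _ (hc i))
  rw [intensity, ← this]
  ring

lemma intensity_mul_productPoisson_shift {c : Fin d → ℝ} (hc : ∀ i, c i ≠ 0) (κk : ℝ)
    (yk yk' x : Fin d → ℕ) :
    (if ∀ i, yk' i ≤ x i + yk i then
        intensity κk yk (fun i => x i + yk i - yk' i)
          * productPoisson c (fun i => x i + yk i - yk' i)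
      else 0)
      = productPoisson c x * (κk * monPow c yk * descPowRatio c x yk') := by
  split_ifs with hle
  · rw [intensity, productPoisson_eq_prod_poissonWeight, mul_assoc, ← prod_mul_distrib,
      prod_congr rfl fun i _ => descFactorial_mul_poissonWeight_shift (hc i) (hle i),
      prod_mul_distrib, prod_mul_distrib, ← productPoisson_eq_prod_poissonWeight, monPow,
      descPowRatio]
    ring
  · obtain ⟨i, hi⟩ := not_forall.mp hle
    have : descPowRatio c x yk' = 0 := prod_eq_zero (mem_univ i) (by
      rw [Nat.descFactorial_eq_zero_iff_lt.mpr (by omega : x i < yk' i)]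
      simp)
    rw [this]
    ring

lemma sum_mul_comp_eq_of_fiber_sums_eq {ι α R : Type*} [DecidableEq α] [Semiring R]
    (s : Finset ι) (y y' : ι → α) (w : ι → R) (f : α → R)
    (h : ∀ z, f z ≠ 0 → ∑ k ∈ s with y k = z, w k = ∑ k ∈ s with y' k = z, w k) :
    ∑ k ∈ s, w k * f (y k) = ∑ k ∈ s, w k * f (y' k) := by
  have fiberwise : ∀ g : ι → α, (∀ k ∈ s, g k ∈ s.image y ∪ s.image y') →
      ∑ k ∈ s, w k * f (g k)
        = ∑ z ∈ s.image y ∪ s.image y', (∑ k ∈ s with g k = z, w k) * f z := by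
    intro g hg
    rw [← sum_fiberwise_of_maps_to hg]
    refine sum_congr rfl fun z _ => ?_
    rw [sum_mul]
    exact sum_congr rfl fun k hk => by rw [(mem_filter.1 hk).2]
  rw [fiberwise y fun k hk => mem_union_left _ (mem_image_of_mem y hk),
    fiberwise y' fun k hk => mem_union_right _ (mem_image_of_mem y' hk)]
  refine sum_congr rfl fun z _ => ?_
  by_cases hz : f z = 0
  · simp [hz]
  · rw [h z hz]

lemma sum_mul_descPowRatio_sub_eq (κ : Fin K → ℝ) (y y' : Fin K → Fin d → ℕ)
    (c : Fin d → ℝ) (x : Fin d → ℕ)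
    (hbal : ∀ z : Fin d → ℕ, 2 ≤ ∑ i, z i →
      ∑ k ∈ univ.filter (fun k => y k = z), κ k * monPow c z
        = ∑ k ∈ univ.filter (fun k => y' k = z), κ k * monPow c (y k)) :
    ∑ k, κ k * monPow c (y k) * descPowRatio c x (y' k)
        - ∑ k, κ k * monPow c (y k) * descPowRatio c x (y k)
      = ∑ k, κ k * monPow c (y k)
          * (logPoissonSlope c x (y' k) - logPoissonSlope c x (y k)) := by
  set w : Fin K → ℝ := fun k => κ k * monPow c (y k)
  set ψ : (Fin d → ℕ) → ℝ := fun z => descPowRatio c x z - logPoissonSlope c x z - 1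
  have hψ : ∑ k, w k * ψ (y k) = ∑ k, w k * ψ (y' k) := by
    refine sum_mul_comp_eq_of_fiber_sums_eq _ y y' w ψ fun z hz => ?_
    have hz2 : 2 ≤ ∑ i, z i := by
      by_contra! hlt
      exact hz (by simp [ψ, descPowRatio_eq_one_add_logPoissonSlope c x (by omega : ∑ i, z i ≤ 1)])
    rw [← hbal z hz2]
    exact sum_congr rfl fun k hk => by simp only [w, (mem_filter.1 hk).2]
  calc _ = ∑ k, w k * (logPoissonSlope c x (y' k) - logPoissonSlope c x (y k))
        + (∑ k, w k * ψ (y' k) - ∑ k, w k * ψ (y k)) := by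
        rw [← sum_sub_distrib, ← sum_sub_distrib, ← sum_add_distrib]
        exact sum_congr rfl fun k _ => by ring
    _ = _ := by rw [hψ, sub_self, add_zero]

lemma sum_mul_logPoissonSlope_sub_eq (κ : Fin K → ℝ) (y y' : Fin K → Fin d → ℕ)
    (c : Fin d → ℝ) (x : Fin d → ℕ) :
    ∑ k, κ k * monPow c (y k) * (logPoissonSlope c x (y' k) - logPoissonSlope c x (y k))
      = ∑ i, (x i / c i - 1) * massActionRHS κ y y' c i := by
  simp only [massActionRHS, Finset.sum_apply, Pi.smul_apply, smul_eq_mul, zetaVec, mul_sum,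
    logPoissonSlope, ← sum_sub_distrib]
  rw [sum_comm]
  exact sum_congr rfl fun k _ => sum_congr rfl fun i _ => by ring

end Network

theorem DR_implies_productPoisson_solution_general
    {d K : ℕ} (κ : Fin K → ℝ) (y y' : Fin K → Fin d → ℕ)
    (ctilde : Fin d → ℝ)
    (c : ℝ → Fin d → ℝ) (hcpos : ∀ t ≥ (0:ℝ), ∀ i, 0 < c t i)
    (hc0 : c 0 = ctilde)
    (hODE : solvesMassAction κ y y' c)
    (hDR : DRcondition κ y y' c) :
    solvesCME κ y y' (fun x t => productPoisson (c t) x)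
      ∧ ∀ x : Fin d → ℕ, productPoisson (c 0) x = productPoisson ctilde x := by
  refine ⟨fun x t ht => ?_, fun x => by rw [hc0]⟩
  have hct : ∀ i, c t i ≠ 0 := fun i => (hcpos t ht i).ne'
  refine (hasDerivWithinAt_productPoisson x (hODE t ht) hct).congr_deriv ?_
  rw [sum_congr rfl fun k _ => intensity_mul_productPoisson_shift hct (κ k) (y k) (y' k) x,
    sum_congr rfl fun k _ => intensity_mul_productPoisson hct (κ k) (y k) x,
    ← mul_sum, ← mul_sum, ← mul_sub,
    sum_mul_descPowRatio_sub_eq κ y y' (c t) x fun z hz => hDR z hz t ht,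
    sum_mul_logPoissonSlope_sub_eq]

/-- Theorem 3.1, (i) ⇒ (iii): if `c > 0` is differentiable, solves the mass-action ODE with
`c(0) = c̃`, and satisfies the DR condition, then the product-Poisson function
`P(x,t) = ∏_i e^{-c_i(t)} c_i(t)^{x_i}/x_i!` solves the chemical master equation, with initial
condition the product-Poisson distribution with parameter `c̃`. -/
theorem DR_implies_productPoisson_solution
    {d K : ℕ} (κ : Fin K → ℝ) (y y' : Fin K → Fin d → ℕ)
    (hκ : ∀ k, 0 ≤ κ k) (hyy' : ∀ k, y' k ≠ y k)
    (ctilde : Fin d → ℝ) (hctilde : ∀ i, 0 < ctilde i)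
    (c : ℝ → Fin d → ℝ) (hcpos : ∀ t ≥ (0:ℝ), ∀ i, 0 < c t i)
    (hc0 : c 0 = ctilde)
    (hODE : solvesMassAction κ y y' c)
    (hDR : DRcondition κ y y' c) :
    solvesCME κ y y' (fun x t => productPoisson (c t) x)
      ∧ ∀ x : Fin d → ℕ, productPoisson (c 0) x = productPoisson ctilde x :=
  DR_implies_productPoisson_solution_general κ y y' ctilde c hcpos hc0 hODE hDR
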